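/- Let A be a C*-algebra and let E ⊆ A be a selfadjoint subspace that is completely approximately 1-generated: for every n ∈ ℕ, {X ∈ Mₙ(E)_sa : ‖X‖ ≤ 1} is contained in the closure of {P − Q : P, Q ∈ Mₙ(E)₊, ‖P‖ ≤ 1, ‖Q‖ ≤ 1}. Let H be a complex Hilbert space and let θ : E → B(H) be a ℂ-linear map with θ(star x) = star(θ x) which is completely isometric (‖θ⁽ⁿ⁾ X‖ = ‖X‖ for all n and X ∈ Mₙ(E)) and a complete order embedding (for all n and X ∈ Mₙ(E): 0 ≤ θ⁽ⁿ⁾ X in Mₙ(B(H)) if and only if 0 ≤ X in Mₙ(A)). Then θ is a gauge maximal isometry: for every n and every selfadjoint X ∈ Mₙ(E), Metric.infDist X Mₙ(E)₊ = Metric.infDist (θ⁽ⁿ⁾ X) (positive cone of Mₙ(B(H))). -/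

import Mathlib

/-!
The map `X ↦ θ⁽ⁿ⁾ X` is isometric and positive, so it carries `Mₙ(E)₊` onto a cone `C` of
positive elements with `dist(X, Mₙ(E)₊) = dist(θ⁽ⁿ⁾ X, C) ≥ dist(θ⁽ⁿ⁾ X, Mₙ(B(H))₊)`.

For the converse, let `x = θ⁽ⁿ⁾ X`. Hahn–Banach applied to the sublinear function
`w ↦ dist(w, C)` gives a contractive real functional `G` with `G ≤ 0` on `C` and
`G x = dist(x, C)`. Let `s` be the supremum of `-G` over the contractions of `C`. Approximate
1-generation says that the self-adjoint contractions of `V = θ⁽ⁿ⁾(Mₙ(E)_sa)` are limits of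
differences of contractions of `C`, so `|G| ≤ s‖·‖` on `V`. A norm-preserving extension `G₂` of
`G|V` has norm `≤ s`, and `s` is approached by `-G₂` on positive contractions; since the
difference of two positive contractions is a contraction, this forces `G₂ ≤ 0` on all positive
elements. Hence `dist(x, C) = G₂ x ≤ G₂ (x - z) ≤ ‖x - z‖` for every positive `z`.
-/

noncomputable section

/-- The `n`-th matrix level `Mₙ(E)` of a subspace `E` of a C*-algebra `A`, realized inside a
C*-algebra `M` given together with a ⋆-algebra isomorphism `e : Mₙ(A) ≃⋆ₐ[ℂ] M`. -/
def matrixLevelSet {A M : Type*} [NonUnitalCStarAlgebra A] [NonUnitalCStarAlgebra M] {n : ℕ}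
    (E : Submodule ℂ A) (e : Matrix (Fin n) (Fin n) A ≃⋆ₐ[ℂ] M) : Set M :=
  {X : M | ∀ i j, e.symm X i j ∈ E}

open Metric Set
open scoped Pointwise CStarAlgebra

theorem mul_le_apply_smul_of_sublinear {E : Type*} [AddCommGroup E] [Module ℝ E] (φ : E → ℝ)
    (hsmul : ∀ c : ℝ, 0 < c → ∀ w, φ (c • w) = c * φ w) (hadd : ∀ u v, φ (u + v) ≤ φ u + φ v)
    (c : ℝ) (x : E) : c * φ x ≤ φ (c • x) := by
  have hzero : φ 0 = 0 := by
    have := hsmul 2 two_pos 0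
    rw [smul_zero] at this
    linarith
  rcases lt_trichotomy c 0 with hc | rfl | hc
  · have := hadd (c • x) ((-c) • x)
    rw [← add_smul, add_neg_cancel, zero_smul, hzero, hsmul _ (neg_pos.2 hc)] at this
    linarith
  · simp [hzero]
  · exact (hsmul c hc x).ge

namespace ConvexCone

variable {E : Type*} [SeminormedAddCommGroup E] [NormedSpace ℝ E] (C : ConvexCone ℝ E)

theorem infDist_smul {c : ℝ} (hc : 0 < c) (x : E) : infDist (c • x) C = c * infDist x C := by
  have hC : c • (C : Set E) = C := Set.ext fun y => by
    rw [Set.mem_smul_set_iff_inv_smul_mem₀ hc.ne', SetLike.mem_coe, SetLike.mem_coe,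
      C.smul_mem_iff (inv_pos.2 hc)]
  rw [← hC, infDist_smul₀ hc.ne', Real.norm_of_nonneg hc.le, hC]

theorem infDist_add_le (u v : E) : infDist (u + v) C ≤ infDist u C + infDist v C := by
  rcases (C : Set E).eq_empty_or_nonempty with hC | hC
  · simp [hC]
  rw [← sub_le_iff_le_add, le_infDist hC]
  intro c hc
  rw [sub_le_comm, le_infDist hC]
  intro d hd
  rw [sub_le_iff_le_add']
  calc infDist (u + v) C ≤ dist (u + v) (c + d) := infDist_le_dist_of_mem (C.add_mem hc hd)
    _ ≤ dist u c + dist v d := dist_add_add_le u v c d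

theorem exists_dual_eq_infDist (hC : C.Pointed) (x : E) :
    ∃ G : E →L[ℝ] ℝ, ‖G‖ ≤ 1 ∧ (∀ c ∈ C, G c ≤ 0) ∧ G x = infDist x C := by
  rcases eq_or_ne x 0 with rfl | hx
  · exact ⟨0, by simp, by simp, by simp [infDist_zero_of_mem hC]⟩
  have hsmul : ∀ c : ℝ, 0 < c → ∀ w : E, infDist (c • w) C = c * infDist w C :=
    fun _ hc => C.infDist_smul hc
  set f : E →ₗ.[ℝ] ℝ := LinearPMap.mkSpanSingleton x (infDist x C) hx
  have hf : ∀ z : f.domain, f z ≤ infDist (z : E) C := by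
    rintro ⟨_, hz⟩
    obtain ⟨c, rfl⟩ := Submodule.mem_span_singleton.mp hz
    calc f ⟨c • x, hz⟩ = c * infDist x C :=
          LinearPMap.mkSpanSingleton'_apply x (infDist x C) _ c hz
      _ ≤ infDist (c • x) C :=
          -- without `(E := E)`, unifying the instance arguments is very slow
          mul_le_apply_smul_of_sublinear (E := E) (infDist · C) hsmul C.infDist_add_le c x
  obtain ⟨g, hgx, hg⟩ :=
    exists_extension_of_le_sublinear f (infDist · C) hsmul C.infDist_add_le hf
  have hnorm : ∀ w, g w ≤ ‖w‖ := fun w =>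
    (hg w).trans (by simpa using infDist_le_dist_of_mem (x := w) hC)
  have hbound : ∀ w, ‖g w‖ ≤ 1 * ‖w‖ := fun w => by
    rw [one_mul, Real.norm_eq_abs, abs_le]
    exact ⟨neg_le.mpr (by simpa using hnorm (-w)), hnorm w⟩
  refine ⟨g.mkContinuous 1 hbound, LinearMap.mkContinuous_norm_le _ zero_le_one _,
    fun c hc => ?_, ?_⟩
  · rw [LinearMap.mkContinuous_apply]
    exact (hg c).trans (infDist_zero_of_mem hc).le
  · rw [LinearMap.mkContinuous_apply]
    exact (hgx _).trans (LinearPMap.mkSpanSingleton_apply ℝ ℝ hx _)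

end ConvexCone

theorem ContinuousLinearMap.abs_apply_le_mul_norm_of_mem_closure_sub {E : Type*}
    [SeminormedAddCommGroup E] [NormedSpace ℝ E] (G : E →L[ℝ] ℝ) {K : Set E} {s : ℝ}
    (hK : ∀ p ∈ K, -s ≤ G p ∧ G p ≤ 0) {V : Submodule ℝ E}
    (hV : ∀ v ∈ V, ‖v‖ ≤ 1 → v ∈ closure (K - K)) {v : E} (hv : v ∈ V) :
    |G v| ≤ s * ‖v‖ := by
  have hclosure : closure (K - K) ⊆ {w | |G w| ≤ s} := by
    refine closure_minimal ?_ (isClosed_le (continuous_abs.comp G.continuous) continuous_const)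
    rintro _ ⟨p, hp, q, hq, rfl⟩
    obtain ⟨hp₁, hp₂⟩ := hK p hp
    obtain ⟨hq₁, hq₂⟩ := hK q hq
    rw [mem_ofPred_eq, map_sub, abs_le]
    constructor <;> linarith
  rcases eq_or_ne ‖v‖ 0 with hv₀ | hv₀
  · simpa [hv₀] using G.le_opNorm v
  have : |G (‖v‖⁻¹ • v)| ≤ s :=
    hclosure (hV _ (V.smul_mem ‖v‖⁻¹ hv) (by
      rw [norm_smul, norm_inv, norm_norm, inv_mul_cancel₀ hv₀]))
  rwa [map_smul, smul_eq_mul, abs_mul, abs_inv, abs_norm,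
    inv_mul_le_iff₀ (lt_of_le_of_ne (norm_nonneg v) (Ne.symm hv₀)), mul_comm] at this

section CStarAlgebra

variable {B : Type*} [NonUnitalCStarAlgebra B] [PartialOrder B] [StarOrderedRing B]

theorem CStarAlgebra.norm_sub_le_one_of_nonneg {a b : B} (ha : 0 ≤ a) (ha₁ : ‖a‖ ≤ 1)
    (hb : 0 ≤ b) (hb₁ : ‖b‖ ≤ 1) : ‖a - b‖ ≤ 1 := by
  rw [← Unitization.norm_inr (𝕜 := ℂ) (a - b), Unitization.inr_sub ℂ]
  obtain ⟨hA₀, hA₁⟩ := CStarAlgebra.inr_mem_Icc_iff_norm_le.mpr ⟨ha, ha₁⟩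
  obtain ⟨hB₀, hB₁⟩ := CStarAlgebra.inr_mem_Icc_iff_norm_le.mpr ⟨hb, hb₁⟩
  have hsa : IsSelfAdjoint ((a : B⁺¹) - b) := hA₀.isSelfAdjoint.sub hB₀.isSelfAdjoint
  have hle : (a : B⁺¹) - b ≤ algebraMap ℝ _ 1 := by
    rw [map_one]
    exact (sub_le_self _ hB₀).trans hA₁
  have hge : algebraMap ℝ _ (-1) ≤ (a : B⁺¹) - b := by
    rw [map_neg, map_one, neg_le_sub_iff_le_add]
    exact hB₁.trans (le_add_of_nonneg_left hA₀)
  rcases CStarAlgebra.norm_or_neg_norm_mem_spectrum hsa with h | h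
  · exact (le_algebraMap_iff_spectrum_le hsa).mp hle _ h
  · linarith [(algebraMap_le_iff_le_spectrum hsa).mp hge _ h]

theorem ContinuousLinearMap.map_nonneg_of_opNorm_le_of_forall_lt (ψ : B →L[ℝ] ℝ) {s : ℝ}
    (hψ : ‖ψ‖ ≤ s) (happrox : ∀ r < s, ∃ p : B, 0 ≤ p ∧ ‖p‖ ≤ 1 ∧ r < ψ p) {a : B}
    (ha : 0 ≤ a) : 0 ≤ ψ a := by
  have hcontr : ∀ a : B, 0 ≤ a → ‖a‖ ≤ 1 → 0 ≤ ψ a := by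
    intro a ha ha₁
    by_contra! hneg
    obtain ⟨p, hp, hp₁, hlt⟩ := happrox (s + ψ a) (by linarith)
    have : ψ (p - a) ≤ s := calc
      ψ (p - a) ≤ ‖ψ‖ * ‖p - a‖ := (Real.le_norm_self _).trans (ψ.le_opNorm _)
      _ ≤ s * 1 := mul_le_mul hψ (CStarAlgebra.norm_sub_le_one_of_nonneg hp hp₁ ha ha₁)
          (norm_nonneg _) ((norm_nonneg ψ).trans hψ)
      _ = s := mul_one s
    rw [map_sub] at this
    linarith
  set t : ℝ := (‖a‖ + 1)⁻¹
  have ht : 0 < t := by positivity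
  have hta : ‖t • a‖ ≤ 1 := by
    rw [norm_smul, Real.norm_of_nonneg ht.le, inv_mul_le_one₀ (by positivity)]
    linarith
  have := hcontr _ (smul_nonneg ht.le ha) hta
  rw [map_smul, smul_eq_mul] at this
  exact nonneg_of_mul_nonneg_right this ht

theorem infDist_convexCone_eq_infDist_nonneg (C : ConvexCone ℝ B) (hC₀ : C.Pointed)
    (hC : ∀ c ∈ C, 0 ≤ c) (V : Submodule ℝ B) (hCV : (C : Set B) ⊆ V)
    (hgen : ∀ v ∈ V, ‖v‖ ≤ 1 →
      v ∈ closure (((C : Set B) ∩ closedBall 0 1) - ((C : Set B) ∩ closedBall 0 1)))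
    {x : B} (hx : x ∈ V) : infDist x C = infDist x {z : B | 0 ≤ z} := by
  refine le_antisymm ?_ (infDist_le_infDist_of_subset hC ⟨0, hC₀⟩)
  obtain ⟨G, hG, hGC, hGx⟩ := C.exists_dual_eq_infDist hC₀ x
  set C₁ := (C : Set B) ∩ closedBall 0 1
  set s := sSup ((fun p => -G p) '' C₁)
  have hbound : ∀ r ∈ (fun p => -G p) '' C₁, r ≤ 1 := by
    rintro _ ⟨p, ⟨-, hp⟩, rfl⟩
    rw [mem_closedBall_zero_iff] at hp
    calc -G p ≤ ‖G‖ * ‖p‖ := (neg_le_abs _).trans (G.le_opNorm p)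
      _ ≤ 1 := mul_le_one₀ hG (norm_nonneg _) hp
  have hzero : (0 : ℝ) ∈ (fun p => -G p) '' C₁ := ⟨0, ⟨hC₀, by simp⟩, by simp⟩
  have hs₀ : 0 ≤ s := le_csSup ⟨1, hbound⟩ hzero
  have hs₁ : s ≤ 1 := csSup_le ⟨0, hzero⟩ hbound
  have hGV : ∀ v ∈ V, |G v| ≤ s * ‖v‖ := fun v hv =>
    G.abs_apply_le_mul_norm_of_mem_closure_sub
      (fun p hp => ⟨neg_le.mp (le_csSup ⟨1, hbound⟩ ⟨p, hp, rfl⟩), hGC p hp.1⟩) hgen hv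
  obtain ⟨G₂, hG₂, hG₂norm⟩ := exists_extension_norm_eq V (G.comp V.subtypeL)
  have hG₂s : ‖G₂‖ ≤ s := hG₂norm ▸ (G.comp V.subtypeL).opNorm_le_bound hs₀ fun v => hGV v v.2
  have hG₂pos : ∀ z : B, 0 ≤ z → 0 ≤ (-G₂) z := by
    refine fun z hz => (-G₂).map_nonneg_of_opNorm_le_of_forall_lt (s := s)
      (by rwa [norm_neg]) (fun r hr => ?_) hz
    obtain ⟨_, ⟨p, hp, rfl⟩, hlt⟩ := exists_lt_of_lt_csSup ⟨0, hzero⟩ hr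
    refine ⟨p, hC p hp.1, mem_closedBall_zero_iff.1 hp.2, ?_⟩
    simpa [hG₂ ⟨p, hCV hp.1⟩] using hlt
  refine (le_infDist ⟨0, le_rfl⟩).2 fun z hz => ?_
  calc infDist x C = G₂ (x - z) + G₂ z := by
        rw [map_sub, sub_add_cancel, ← hGx]
        exact (hG₂ ⟨x, hx⟩).symm
    _ ≤ ‖G₂‖ * ‖x - z‖ + 0 :=
      add_le_add ((Real.le_norm_self _).trans (G₂.le_opNorm _)) (neg_nonneg.mp (hG₂pos z hz))
    _ ≤ 1 * ‖x - z‖ + 0 := by gcongr; exact hG₂s.trans hs₁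
    _ = dist x z := by rw [one_mul, add_zero, dist_eq_norm]

end CStarAlgebra

theorem LinearIsometry.infDist_nonneg_eq {M N : Type*} [NonUnitalCStarAlgebra M]
    [PartialOrder M] [StarOrderedRing M] [NonUnitalCStarAlgebra N] [PartialOrder N]
    [StarOrderedRing N] {S : Submodule ℝ M} (T : S →ₗᵢ[ℝ] N)
    (hT : ∀ y : S, 0 ≤ (y : M) → 0 ≤ T y)
    (hgen : ∀ y ∈ S, IsSelfAdjoint y → ‖y‖ ≤ 1 →
      y ∈ closure ({p | p ∈ S ∧ 0 ≤ p ∧ ‖p‖ ≤ 1} - {p | p ∈ S ∧ 0 ≤ p ∧ ‖p‖ ≤ 1}))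
    (x : S) (hx : IsSelfAdjoint (x : M)) :
    infDist (x : M) {y | y ∈ S ∧ 0 ≤ y} = infDist (T x) {z : N | 0 ≤ z} := by
  set P : ConvexCone ℝ S := (ConvexCone.positive ℝ M).comap S.subtype
  set C : ConvexCone ℝ N := P.map T.toLinearMap
  set V : Submodule ℝ N := ((selfAdjoint.submodule ℝ M).comap S.subtype).map T.toLinearMap
  have hP : (Subtype.val '' (P : Set S)) = {y | y ∈ S ∧ 0 ≤ y} := by
    ext y
    simp [P, and_comm]
  have hC : (C : Set N) = T '' P := ConvexCone.coe_map _ _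
  have hdist : infDist (x : M) {y | y ∈ S ∧ 0 ≤ y} = infDist (T x) C := by
    rw [← hP, hC, infDist_image T.isometry, infDist_image isometry_subtype_coe]
  rw [hdist]
  refine infDist_convexCone_eq_infDist_nonneg C ⟨0, by simp [P], map_zero _⟩ ?_ V ?_ ?_
    ⟨x, hx, rfl⟩
  · rintro _ ⟨y, hy, rfl⟩
    exact hT y hy
  · rintro _ ⟨y, hy, rfl⟩
    exact ⟨y, IsSelfAdjoint.of_nonneg hy, rfl⟩
  · rintro _ ⟨y, hy, rfl⟩ hy₁
    rw [LinearIsometry.coe_toLinearMap, T.norm_map] at hy₁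
    have hyc := hgen y y.2 hy hy₁
    rw [Metric.mem_closure_iff] at hyc ⊢
    intro ε hε
    obtain ⟨_, ⟨p, hp, q, hq, rfl⟩, hd⟩ := hyc ε hε
    refine ⟨T ⟨p, hp.1⟩ - T ⟨q, hq.1⟩, ⟨T ⟨p, hp.1⟩, ⟨?_, ?_⟩, T ⟨q, hq.1⟩, ⟨?_, ?_⟩, rfl⟩, ?_⟩
    · exact ⟨⟨p, hp.1⟩, hp.2.1, rfl⟩
    · rw [mem_closedBall_zero_iff, T.norm_map]; exact hp.2.2
    · exact ⟨⟨q, hq.1⟩, hq.2.1, rfl⟩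
    · rw [mem_closedBall_zero_iff, T.norm_map]; exact hq.2.2
    · rw [← map_sub, LinearIsometry.coe_toLinearMap, T.dist_map]
      exact hd

section MatrixLevel

variable {A M B N : Type*} [NonUnitalCStarAlgebra A] [NonUnitalCStarAlgebra M]
  [NonUnitalCStarAlgebra B] [NonUnitalCStarAlgebra N] {n : ℕ}

def matrixLevel (E : Submodule ℂ A) (e : Matrix (Fin n) (Fin n) A ≃⋆ₐ[ℂ] M) :
    Submodule ℝ M where
  carrier := matrixLevelSet E e
  add_mem' hX hY i j := by simpa using E.add_mem (hX i j) (hY i j)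
  zero_mem' i j := by simp
  smul_mem' r X hX i j := by
    rw [← Complex.coe_smul, map_smul]
    exact E.smul_mem _ (hX i j)

def matrixLevel.amplification {E : Submodule ℂ A} (θ : E →ₗ[ℂ] B)
    (e : Matrix (Fin n) (Fin n) A ≃⋆ₐ[ℂ] M) (f : Matrix (Fin n) (Fin n) B ≃⋆ₐ[ℂ] N) :
    matrixLevel E e →ₗ[ℝ] N where
  toFun X := f (Matrix.of fun i j => θ ⟨e.symm X i j, X.2 i j⟩)
  map_add' X Y := by
    rw [← map_add]
    congr 1
    ext i j
    simp [← map_add θ]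
  map_smul' r X := by
    rw [RingHom.id_apply, ← Complex.coe_smul, ← map_smul]
    congr 1
    ext i j
    simp [← map_smul θ, ← Complex.coe_smul]

end MatrixLevel

theorem stmt_13_general {A : Type*} [NonUnitalCStarAlgebra A]
    (E : Submodule ℂ A)
    (M : ℕ → Type*) [∀ n, NonUnitalCStarAlgebra (M n)] [∀ n, PartialOrder (M n)]
    [∀ n, StarOrderedRing (M n)]
    (e : ∀ n, Matrix (Fin n) (Fin n) A ≃⋆ₐ[ℂ] M n)
    -- `E` is completely approximately 1-generated
    (h1gen : ∀ n : ℕ, {X : M n | X ∈ matrixLevelSet E (e n) ∧ star X = X ∧ ‖X‖ ≤ 1} ⊆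
      closure {Y : M n | ∃ P Q : M n, P ∈ matrixLevelSet E (e n) ∧ 0 ≤ P ∧ ‖P‖ ≤ 1 ∧
        Q ∈ matrixLevelSet E (e n) ∧ 0 ≤ Q ∧ ‖Q‖ ≤ 1 ∧ Y = P - Q})
    (H : Type*) [NormedAddCommGroup H] [InnerProductSpace ℂ H] [CompleteSpace H]
    (N : ℕ → Type*) [∀ n, NonUnitalCStarAlgebra (N n)] [∀ n, PartialOrder (N n)]
    [∀ n, StarOrderedRing (N n)]
    (f : ∀ n, Matrix (Fin n) (Fin n) (H →L[ℂ] H) ≃⋆ₐ[ℂ] N n)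
    (θ : E →ₗ[ℂ] (H →L[ℂ] H))
    -- `θ` is completely isometric
    (hisom : ∀ (n : ℕ) (X : M n) (hX : ∀ i j, (e n).symm X i j ∈ E),
      ‖(f n) (Matrix.of fun i j => θ ⟨(e n).symm X i j, hX i j⟩)‖ = ‖X‖)
    -- `θ` is a complete order embedding
    (horder : ∀ (n : ℕ) (X : M n) (hX : ∀ i j, (e n).symm X i j ∈ E),
      0 ≤ (f n) (Matrix.of fun i j => θ ⟨(e n).symm X i j, hX i j⟩) ↔ 0 ≤ X) :
    -- then `θ` is a gauge maximal isometry
    ∀ (n : ℕ) (X : M n) (hX : ∀ i j, (e n).symm X i j ∈ E), IsSelfAdjoint X →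
      Metric.infDist X {Y : M n | Y ∈ matrixLevelSet E (e n) ∧ 0 ≤ Y} =
        Metric.infDist ((f n) (Matrix.of fun i j => θ ⟨(e n).symm X i j, hX i j⟩))
          {Z : N n | 0 ≤ Z} := by
  intro n X hX hXsa
  let θₙ : matrixLevel E (e n) →ₗᵢ[ℝ] N n :=
    { matrixLevel.amplification θ (e n) (f n) with norm_map' := fun Y => hisom n Y Y.2 }
  refine θₙ.infDist_nonneg_eq (fun Y hY => (horder n Y Y.2).2 hY)
    (fun Y hY hYsa hY₁ => ?_) ⟨X, hX⟩ hXsa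
  convert h1gen n ⟨hY, hYsa, hY₁⟩ using 2
  ext Z
  simp only [Set.mem_sub, Set.mem_ofPred_eq]
  constructor
  · rintro ⟨P, hP, Q, hQ, rfl⟩
    exact ⟨P, Q, hP.1, hP.2.1, hP.2.2, hQ.1, hQ.2.1, hQ.2.2, rfl⟩
  · rintro ⟨P, Q, hP, hP₀, hP₁, hQ, hQ₀, hQ₁, rfl⟩
    exact ⟨P, ⟨hP, hP₀, hP₁⟩, Q, ⟨hQ, hQ₀, hQ₁⟩, rfl⟩

/-- **Theorem 4.17.** Let `E` be a completely approximately 1-generated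
selfadjoint subspace of a C*-algebra `A`, and let `θ : E → B(H)` be a completely isometric
complete order embedding.  Then `θ` is a gauge maximal isometry:
`dist(X, Mₙ(E)₊) = dist(θ⁽ⁿ⁾ X, Mₙ(B(H))₊)` for every selfadjoint `X ∈ Mₙ(E)`.
(Matrix levels over `A` and over `B(H)` are realized via families of ⋆-isomorphisms
onto C*-algebras `M n`, `N n`.) -/
theorem stmt_13 {A : Type*} [NonUnitalCStarAlgebra A] [PartialOrder A] [StarOrderedRing A]
    (E : Submodule ℂ A) (hEclosed : IsClosed (E : Set A)) (hEstar : ∀ x ∈ E, star x ∈ E)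
    (M : ℕ → Type*) [∀ n, NonUnitalCStarAlgebra (M n)] [∀ n, PartialOrder (M n)]
    [∀ n, StarOrderedRing (M n)]
    (e : ∀ n, Matrix (Fin n) (Fin n) A ≃⋆ₐ[ℂ] M n)
    -- `E` is completely approximately 1-generated
    (h1gen : ∀ n : ℕ, {X : M n | X ∈ matrixLevelSet E (e n) ∧ star X = X ∧ ‖X‖ ≤ 1} ⊆
      closure {Y : M n | ∃ P Q : M n, P ∈ matrixLevelSet E (e n) ∧ 0 ≤ P ∧ ‖P‖ ≤ 1 ∧
        Q ∈ matrixLevelSet E (e n) ∧ 0 ≤ Q ∧ ‖Q‖ ≤ 1 ∧ Y = P - Q})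
    (H : Type*) [NormedAddCommGroup H] [InnerProductSpace ℂ H] [CompleteSpace H]
    (N : ℕ → Type*) [∀ n, NonUnitalCStarAlgebra (N n)] [∀ n, PartialOrder (N n)]
    [∀ n, StarOrderedRing (N n)]
    (f : ∀ n, Matrix (Fin n) (Fin n) (H →L[ℂ] H) ≃⋆ₐ[ℂ] N n)
    (θ : E →ₗ[ℂ] (H →L[ℂ] H))
    -- `θ` is star-preserving
    (hstar : ∀ (x : A) (hx : x ∈ E) (hsx : star x ∈ E),
      θ ⟨star x, hsx⟩ = star (θ ⟨x, hx⟩))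
    -- `θ` is completely isometric
    (hisom : ∀ (n : ℕ) (X : M n) (hX : ∀ i j, (e n).symm X i j ∈ E),
      ‖(f n) (Matrix.of fun i j => θ ⟨(e n).symm X i j, hX i j⟩)‖ = ‖X‖)
    -- `θ` is a complete order embedding
    (horder : ∀ (n : ℕ) (X : M n) (hX : ∀ i j, (e n).symm X i j ∈ E),
      0 ≤ (f n) (Matrix.of fun i j => θ ⟨(e n).symm X i j, hX i j⟩) ↔ 0 ≤ X) :
    -- then `θ` is a gauge maximal isometry
    ∀ (n : ℕ) (X : M n) (hX : ∀ i j, (e n).symm X i j ∈ E), IsSelfAdjoint X →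
      Metric.infDist X {Y : M n | Y ∈ matrixLevelSet E (e n) ∧ 0 ≤ Y} =
        Metric.infDist ((f n) (Matrix.of fun i j => θ ⟨(e n).symm X i j, hX i j⟩))
          {Z : N n | 0 ≤ Z} :=
  stmt_13_general E M e h1gen H N f θ hisom horder
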